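/- Let n ≥ 3 be a natural number and consider the polynomial vector field (P₀, P₁, P₂) on ℝ³ defined below. Then for every real t there exists a real number λ such that (P₀, P₁, P₂) evaluated at the point (2(n−2)t/(n−1), t, t) equals λ·(2(n−2)/(n−1), 1, 1). In other words, the straight line γ(t) = (2(n−2)t/(n−1), t, t) is invariant under the flow of the vector field. -/

import Mathlib

/-- Component P₀ of the rescaled normalized Ricci flow vector field on V₂ℝⁿ. -/
noncomputable def P₀ (n x₀ x₁ x₂ : ℝ) : ℝ :=
  (n - 2) * x₀ *
    (n * x₀ ^ 2 + n * x₀ * x₁ + n * x₀ * x₂ - n * x₁ ^ 2 + 2 * n * x₁ * x₂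
      - n * x₂ ^ 2 - 2 * x₀ ^ 2 - 2 * x₀ * x₁ - 2 * x₀ * x₂ + x₁ ^ 2
      - 2 * x₁ * x₂ + x₂ ^ 2)

/-- Component P₁ of the rescaled normalized Ricci flow vector field on V₂ℝⁿ. -/
noncomputable def P₁ (n x₀ x₁ x₂ : ℝ) : ℝ :=
  (1 / 2) * x₁ *
    (2 * n ^ 2 * x₀ * x₁ + 6 * n ^ 2 * x₀ * x₂ - 3 * n * x₀ ^ 2 - 8 * n * x₀ * x₁
      - 22 * n * x₀ * x₂ + n * x₁ ^ 2 + 2 * n * x₁ * x₂ - 3 * n * x₂ ^ 2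
      + 5 * x₀ ^ 2 + 8 * x₀ * x₁ + 20 * x₀ * x₂ - x₁ ^ 2 - 4 * x₁ * x₂ + 5 * x₂ ^ 2)

/-- Component P₂ of the rescaled normalized Ricci flow vector field on V₂ℝⁿ. -/
noncomputable def P₂ (n x₀ x₁ x₂ : ℝ) : ℝ :=
  (1 / 2) * x₂ *
    (6 * n ^ 2 * x₀ * x₁ + 2 * n ^ 2 * x₀ * x₂ - 3 * n * x₀ ^ 2 - 22 * n * x₀ * x₁
      - 8 * n * x₀ * x₂ - 3 * n * x₁ ^ 2 + 2 * n * x₁ * x₂ + n * x₂ ^ 2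
      + 5 * x₀ ^ 2 + 20 * x₀ * x₁ + 8 * x₀ * x₂ + 5 * x₁ ^ 2 - 4 * x₁ * x₂ - x₂ ^ 2)


/-! On the line `(a t, t, t)` the last two components agree by the symmetry `x₁ ↔ x₂`, and
`P₀ - a P₁` factors as `a² (2n - 3)/2 · ((n - 1) a - 2 (n - 2)) · t³`, so the vector field is
parallel to `(a, 1, 1)` exactly when `a = 2 (n - 2)/(n - 1)` (or `a = 0`). -/

theorem P₂_eq_P₁_swap (n x₀ x₁ x₂ : ℝ) : P₂ n x₀ x₁ x₂ = P₁ n x₀ x₂ x₁ := by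
  unfold P₁ P₂
  ring

theorem P₀_sub_mul_P₁_on_line (n a t : ℝ) :
    P₀ n (a * t) t t - a * P₁ n (a * t) t t
      = a ^ 2 * (2 * n - 3) / 2 * ((n - 1) * a - 2 * (n - 2)) * t ^ 3 := by
  unfold P₀ P₁
  ring

theorem P₀_eq_mul_P₁_on_line {n a : ℝ} (ha : (n - 1) * a = 2 * (n - 2)) (t : ℝ) :
    P₀ n (a * t) t t = a * P₁ n (a * t) t t := by
  have h := P₀_sub_mul_P₁_on_line n a t
  rw [ha, sub_self, mul_zero, zero_mul] at h
  exact sub_eq_zero.mp h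

theorem stiefel_V2Rn_line_invariant (n : ℕ) (hn : 3 ≤ n) :
    ∀ t : ℝ, ∃ lam : ℝ,
      P₀ (n : ℝ) (2 * ((n : ℝ) - 2) / ((n : ℝ) - 1) * t) t t
          = lam * (2 * ((n : ℝ) - 2) / ((n : ℝ) - 1)) ∧
      P₁ (n : ℝ) (2 * ((n : ℝ) - 2) / ((n : ℝ) - 1) * t) t t = lam * 1 ∧
      P₂ (n : ℝ) (2 * ((n : ℝ) - 2) / ((n : ℝ) - 1) * t) t t = lam * 1 := by
  intro t
  have hn₁ : (n : ℝ) - 1 ≠ 0 := by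
    have : (3 : ℝ) ≤ n := by exact_mod_cast hn
    linarith
  have ha : ((n : ℝ) - 1) * (2 * ((n : ℝ) - 2) / ((n : ℝ) - 1)) = 2 * ((n : ℝ) - 2) :=
    mul_div_cancel₀ _ hn₁
  refine ⟨P₁ n (2 * ((n : ℝ) - 2) / ((n : ℝ) - 1) * t) t t, ?_, (mul_one _).symm, ?_⟩
  · rw [P₀_eq_mul_P₁_on_line ha, mul_comm]
  · rw [P₂_eq_P₁_swap, mul_one]
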